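/- Let k ≥ 0 be an integer and let s₁, s₂ be natural numbers with s₂ < 2^k, and set s = s₁·2^{k+1} + s₂ (so that the binary digit of s in position k is 0). Then b_s = b_{s₁} · b_{s₂}. -/

import Mathlib

/-- `Lessdot l₁ l₂ s` means `l₁ + l₂ ⋖ s`: for every bit position `i`,
the binary digits satisfy `(l₁)ᵢ + (l₂)ᵢ ≤ (s)ᵢ`. -/
def Lessdot (l₁ l₂ s : ℕ) : Prop :=
  ∀ i : ℕ, (l₁.testBit i).toNat + (l₂.testBit i).toNat ≤ (s.testBit i).toNat

open scoped Classical in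
/-- `BSet r s = B_s^{(r)} = {2^r·l₁ + l₂ : l₁ + l₂ ⋖ s}`.
(Note `l₁ + l₂ ⋖ s` forces `l₁, l₂ ≤ s`, so the ranges capture the whole set.) -/
noncomputable def BSet (r s : ℕ) : Finset ℕ :=
  ((Finset.range (s + 1) ×ˢ Finset.range (s + 1)).filter
    (fun p => Lessdot p.1 p.2 s)).image (fun p => 2 ^ r * p.1 + p.2)

/-- `Nnum r m = N_m^{(r)} = Σ_{s=0}^{2^m−1} |B_s^{(r)}|`. -/
noncomputable def Nnum (r m : ℕ) : ℕ := ∑ s ∈ Finset.range (2 ^ m), (BSet r s).card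

lemma lessdot_div_two {l₁ l₂ s : ℕ} (h : Lessdot l₁ l₂ s) :
    Lessdot (l₁ / 2) (l₂ / 2) (s / 2) := fun i => by
  simpa [Nat.testBit_div_two] using h (i + 1)

lemma lessdot_add_le {s : ℕ} : ∀ {l₁ l₂ : ℕ}, Lessdot l₁ l₂ s → l₁ + l₂ ≤ s := by
  induction s using Nat.strong_induction_on with
  | _ s ih =>
    intro l₁ l₂ h
    rcases Nat.eq_zero_or_pos s with rfl | hs
    · have h1 : l₁ = 0 := Nat.eq_of_testBit_eq fun i => by
        have := h i
        simp only [Nat.zero_testBit, Bool.toNat_false, Nat.le_zero,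
          Nat.add_eq_zero, Bool.toNat_eq_zero] at this
        simp [this.1]
      have h2 : l₂ = 0 := Nat.eq_of_testBit_eq fun i => by
        have := h i
        simp only [Nat.zero_testBit, Bool.toNat_false, Nat.le_zero,
          Nat.add_eq_zero, Bool.toNat_eq_zero] at this
        simp [this.2]
      omega
    · have h0 := h 0
      rw [Nat.toNat_testBit, Nat.toNat_testBit, Nat.toNat_testBit] at h0
      simp only [pow_zero, Nat.div_one] at h0
      have hrec := ih (s / 2) (Nat.div_lt_self hs one_lt_two) (lessdot_div_two h)
      omega

lemma mem_BSet {r s x : ℕ} :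
    x ∈ BSet r s ↔ ∃ l₁ l₂, Lessdot l₁ l₂ s ∧ 2 ^ r * l₁ + l₂ = x := by
  classical
  simp only [BSet, Finset.mem_image, Finset.mem_filter, Finset.mem_product, Finset.mem_range]
  constructor
  · rintro ⟨⟨l₁, l₂⟩, ⟨⟨-, -⟩, hd⟩, rfl⟩
    exact ⟨l₁, l₂, hd, rfl⟩
  · rintro ⟨l₁, l₂, hd, rfl⟩
    have := lessdot_add_le hd
    exact ⟨(l₁, l₂), ⟨⟨by omega, by omega⟩, hd⟩, rfl⟩

lemma BSet_lt {s x : ℕ} (hx : x ∈ BSet 1 s) : x < 2 * s + 1 := by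
  rw [mem_BSet] at hx
  obtain ⟨l₁, l₂, hd, rfl⟩ := hx
  have h1 := lessdot_add_le hd
  omega

lemma lessdot_split {k s₁ s₂ a₁ a₂ b₁ b₂ : ℕ} (hs₂ : s₂ < 2 ^ (k + 1))
    (ha₂ : a₂ < 2 ^ (k + 1)) (hb₂ : b₂ < 2 ^ (k + 1)) :
    Lessdot (a₁ * 2 ^ (k + 1) + a₂) (b₁ * 2 ^ (k + 1) + b₂) (s₁ * 2 ^ (k + 1) + s₂) ↔
      Lessdot a₁ b₁ s₁ ∧ Lessdot a₂ b₂ s₂ := by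
  rw [mul_comm a₁, mul_comm b₁, mul_comm s₁]
  constructor
  · intro h
    constructor
    · intro i
      have := h (i + (k + 1))
      rw [Nat.testBit_two_pow_mul_add _ ha₂, Nat.testBit_two_pow_mul_add _ hb₂,
        Nat.testBit_two_pow_mul_add _ hs₂] at this
      simpa [show ¬ (i + (k + 1) ≤ k) by omega] using this
    · intro i
      by_cases hi : i < k + 1
      · have := h i
        rw [Nat.testBit_two_pow_mul_add _ ha₂, Nat.testBit_two_pow_mul_add _ hb₂,
          Nat.testBit_two_pow_mul_add _ hs₂] at this
        simpa [hi] using this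
      · have hle : 2 ^ (k + 1) ≤ 2 ^ i := Nat.pow_le_pow_right (by norm_num) (by omega)
        rw [Nat.testBit_lt_two_pow (by omega), Nat.testBit_lt_two_pow (by omega)]
        simp
  · rintro ⟨h1, h2⟩ i
    rw [Nat.testBit_two_pow_mul_add _ ha₂, Nat.testBit_two_pow_mul_add _ hb₂,
      Nat.testBit_two_pow_mul_add _ hs₂]
    by_cases hi : i < k + 1
    · simpa [hi] using h2 i
    · simpa [hi] using h1 (i - (k + 1))

/-- For `k ≥ 0` and `s₂ < 2^k`, setting `s = s₁·2^{k+1} + s₂` (so the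
binary digit of `s` in position `k` is 0), one has `b_s = b_{s₁} · b_{s₂}`. -/
theorem stmt_5 (k s₁ s₂ : ℕ) (hs₂ : s₂ < 2 ^ k) :
    (BSet 1 (s₁ * 2 ^ (k + 1) + s₂)).card = (BSet 1 s₁).card * (BSet 1 s₂).card := by
  classical
  set K := 2 ^ (k + 1) with hK
  have hKpos : 0 < K := Nat.pow_pos (by norm_num)
  have hs₂' : s₂ < K := by
    have : 2 ^ k ≤ K := Nat.pow_le_pow_right (by norm_num) (by omega)
    omega
  have hKk : K = 2 * 2 ^ k := by rw [hK, pow_succ, mul_comm]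
  have hbound : ∀ x ∈ BSet 1 s₂, x < K := fun x hx => by
    have := BSet_lt hx; omega
  have key : BSet 1 (s₁ * K + s₂) =
      (BSet 1 s₁ ×ˢ BSet 1 s₂).image (fun p => p.1 * K + p.2) := by
    ext x
    simp only [Finset.mem_image, Finset.mem_product, mem_BSet]
    constructor
    · rintro ⟨l₁, l₂, hd, rfl⟩
      set a₁ := l₁ / K with ha₁
      set a₂ := l₁ % K with ha₂
      set b₁ := l₂ / K with hb₁
      set b₂ := l₂ % K with hb₂
      have hl₁ : l₁ = a₁ * K + a₂ := by rw [ha₁, ha₂, mul_comm, Nat.div_add_mod]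
      have hl₂ : l₂ = b₁ * K + b₂ := by rw [hb₁, hb₂, mul_comm, Nat.div_add_mod]
      have ha₂' : a₂ < K := Nat.mod_lt _ hKpos
      have hb₂' : b₂ < K := Nat.mod_lt _ hKpos
      rw [hl₁, hl₂] at hd
      rw [lessdot_split hs₂' ha₂' hb₂'] at hd
      refine ⟨(2 ^ 1 * a₁ + b₁, 2 ^ 1 * a₂ + b₂),
        ⟨⟨a₁, b₁, hd.1, rfl⟩, ⟨a₂, b₂, hd.2, rfl⟩⟩, ?_⟩
      rw [hl₁, hl₂]; ring
    · rintro ⟨⟨x₁, x₂⟩, ⟨⟨a₁, b₁, h1, rfl⟩, ⟨a₂, b₂, h2, rfl⟩⟩, rfl⟩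
      have hab : a₂ + b₂ ≤ s₂ := lessdot_add_le h2
      refine ⟨a₁ * K + a₂, b₁ * K + b₂,
        (lessdot_split hs₂' (by omega) (by omega)).2 ⟨h1, h2⟩, by ring⟩
  rw [key, Finset.card_image_of_injOn, Finset.card_product]
  rintro ⟨p₁, p₂⟩ hp ⟨q₁, q₂⟩ hq h
  simp only [Finset.coe_product, Set.mem_prod] at hp hq
  have hp₂ := hbound _ hp.2
  have hq₂ := hbound _ hq.2
  simp only at h
  have e1 : p₁ = q₁ := by
    have : (p₁ * K + p₂) / K = (q₁ * K + q₂) / K := by rw [h]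
    rwa [mul_comm p₁, mul_comm q₁, Nat.mul_add_div hKpos, Nat.mul_add_div hKpos,
      Nat.div_eq_of_lt hp₂, Nat.div_eq_of_lt hq₂] at this
  have e2 : p₂ = q₂ := by
    have : (p₁ * K + p₂) % K = (q₁ * K + q₂) % K := by rw [h]
    rwa [Nat.mul_add_mod', Nat.mul_add_mod', Nat.mod_eq_of_lt hp₂,
      Nat.mod_eq_of_lt hq₂] at this
  exact Prod.ext e1 e2
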